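/- In the setting of the level-set foliation ℱ of a one-sided neighborhood of ∂Ω by {φ = −δ}, with ξ the unique (1,0) vector field satisfying ∂φ(ξ)=1 and ∂∂̄φ(ξ, Z̄)=0 for Z ∈ T_{1,0}(ℱ), transverse curvature r = 2∂∂̄φ(ξ, ξ̄), and ξ = ½(N − iT): the exterior derivative of θ = (i/2)(∂̄−∂)φ satisfies dθ = 2i g_{αβ̄} θ^α ∧ θ^β̄ + r dφ ∧ θ, where {θ^α} is the coframe dual to a frame {W_α} of T_{1,0}(ℱ) (annihilating T and N) and g_{αβ̄} = g_θ(W_α, W_β̄). Consequently i_T dθ = −(r/2) dφ and i_N dθ = r θ. -/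

import Mathlib

/-!
STATEMENT 10.  In the setting of the level-set foliation ℱ of a one-sided
neighborhood of ∂Ω by {φ = −δ} ⊂ ℂⁿ, with ξ the unique (1,0) field satisfying
∂φ(ξ) = 1 and ∂∂̄φ(ξ,Z̄) = 0 for Z ∈ T_{1,0}(ℱ), transverse curvature
r = 2∂∂̄φ(ξ,ξ̄), ξ = ½(N − iT):  the contact form θ = (i/2)(∂̄−∂)φ satisfies
  dθ = 2i g_{αβ̄} θ^α ∧ θ^β̄ + r dφ ∧ θ,
where {θ^α} is the coframe dual to a frame {W_α} of T_{1,0}(ℱ) (annihilating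
T and N) and g_{αβ̄} = L_θ(W_α, W_β̄).  Consequently i_T dθ = −(r/2)dφ and
i_N dθ = rθ.

Conventions (flat ambient ℂⁿ, J v = i•v):  complexified tangent vectors are
pairs (u₁,u₂) ∈ E×E representing u₁ + i u₂;  θ = ½d^cφ, i.e. θ(v) = −½dφ(Jv);
the exterior derivative of a 1-form and the wedge of 1-forms use the
½-convention (dω(X,Y) = ½(Xω(Y) − Yω(X)), (α∧β)(X,Y) = ½(α(X)β(Y) − α(Y)β(X)));
∂∂̄φ = −i dθ, so r and the orthogonality conditions are written via dθ.
-/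

noncomputable section

open Complex

abbrev Cn (n : ℕ) := EuclideanSpace ℂ (Fin n)
abbrev CV (n : ℕ) := Cn n × Cn n

/-- multiplication of a complexified tangent vector by a complex scalar -/
def smulC {n : ℕ} (z : ℂ) (u : CV n) : CV n :=
  (z.re • u.1 - z.im • u.2, z.im • u.1 + z.re • u.2)

/-- conjugation of complexified tangent vectors -/
def conjC {n : ℕ} (u : CV n) : CV n := (u.1, -u.2)

/-- ℂ-linear extension of a real 1-form -/
def ext1 {n : ℕ} (ω : Cn n → Cn n → ℝ) (p : Cn n) (u : CV n) : ℂ :=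
  (ω p u.1 : ℝ) + Complex.I * (ω p u.2 : ℝ)

/-- ℂ-bilinear extension of a real 2-form -/
def ext2 {n : ℕ} (B : Cn n → Cn n → Cn n → ℝ) (p : Cn n) (u v : CV n) : ℂ :=
  ((B p u.1 v.1 - B p u.2 v.2 : ℝ) : ℂ)
    + Complex.I * ((B p u.1 v.2 + B p u.2 v.1 : ℝ) : ℂ)

/-- exterior derivative of a real 1-form (½-convention) -/
def d1h {n : ℕ} (ω : Cn n → Cn n → ℝ) (p v w : Cn n) : ℝ :=
  (1/2 : ℝ) * (fderiv ℝ (fun q => ω q w) p v - fderiv ℝ (fun q => ω q v) p w)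

/-- wedge product of complex 1-forms at a point (½-convention) -/
def wedgeC {n : ℕ} (α β : CV n → ℂ) (u v : CV n) : ℂ :=
  (1/2 : ℂ) * (α u * β v - α v * β u)

/-- θ = (i/2)(∂̄−∂)φ = ½ d^cφ -/
def θf {n : ℕ} (φ : Cn n → ℝ) (p v : Cn n) : ℝ :=
  -(1/2 : ℝ) * fderiv ℝ φ p (Complex.I • v)

/-- dθ -/
def dθ {n : ℕ} (φ : Cn n → ℝ) : Cn n → Cn n → Cn n → ℝ := fun p => d1h (θf φ) p

/-- dφ -/
def dφ1 {n : ℕ} (φ : Cn n → ℝ) (p v : Cn n) : ℝ := fderiv ℝ φ p v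

/-- ξ = ½(N − iT) -/
def xiF {n : ℕ} (T N : Cn n → Cn n) (p : Cn n) : CV n :=
  ((1/2 : ℝ) • N p, -((1/2 : ℝ) • T p))

-- second derivative
def H2 {n : ℕ} (φ : Cn n → ℝ) (p : Cn n) : Cn n →L[ℝ] Cn n →L[ℝ] ℝ :=
  fderiv ℝ (fderiv ℝ φ) p

variable {n : ℕ} {φ : Cn n → ℝ}

lemma H2_symm (hφ : ContDiff ℝ (⊤ : ℕ∞) φ) (p v w : Cn n) : H2 φ p v w = H2 φ p w v := by
  apply second_derivative_symmetric (f := φ) (f' := fderiv ℝ φ)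
  · exact fun y => (hφ.differentiable (by simp) y).hasFDerivAt
  · exact ((hφ.fderiv_right (m := (⊤ : ℕ∞)) (by simp)).differentiable (by simp) p).hasFDerivAt

lemma fderiv_apply_const (hφ : ContDiff ℝ (⊤ : ℕ∞) φ) (p v c : Cn n) :
    fderiv ℝ (fun q => fderiv ℝ φ q c) p v = H2 φ p v c := by
  have hd : DifferentiableAt ℝ (fderiv ℝ φ) p :=
    ((hφ.fderiv_right (m := (⊤ : ℕ∞)) (by simp)).differentiable (by simp) p)
  rw [show (fun q => fderiv ℝ φ q c) = (fun q => (fderiv ℝ φ q) ((fun _ => c) q)) from rfl,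
    fderiv_clm_apply hd (differentiableAt_const c)]
  simp [H2]

lemma dθ_formula (hφ : ContDiff ℝ (⊤ : ℕ∞) φ) (p v w : Cn n) :
    dθ φ p v w = -(1/4 : ℝ) * (H2 φ p v (Complex.I • w) - H2 φ p w (Complex.I • v)) := by
  have h : ∀ c v : Cn n, fderiv ℝ (fun q => θf φ q c) p v = -(1/2:ℝ) * H2 φ p v (Complex.I • c) := by
    intro c v
    have : (fun q => θf φ q c) = fun q => -(1/2:ℝ) * (fderiv ℝ φ q (Complex.I • c)) := rfl
    rw [this, fderiv_const_mul]
    · simp [fderiv_apply_const hφ]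
    · -- differentiability of q ↦ fderiv φ q (I•c)
      have hd : DifferentiableAt ℝ (fderiv ℝ φ) p :=
        ((hφ.fderiv_right (m := (⊤ : ℕ∞)) (by simp)).differentiable (by simp) p)
      exact hd.clm_apply (differentiableAt_const _)
  simp only [dθ, d1h, h]
  ring

-- bilinearity of dθ
lemma dθ_bilin_left (hφ : ContDiff ℝ (⊤ : ℕ∞) φ) (p : Cn n) (a b : ℝ) (x y w : Cn n) :
    dθ φ p (a • x + b • y) w = a * dθ φ p x w + b * dθ φ p y w := by
  simp only [dθ_formula hφ, smul_add, smul_comm Complex.I, map_add, map_smul,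
    ContinuousLinearMap.add_apply, ContinuousLinearMap.coe_smul', Pi.smul_apply,
    smul_eq_mul, ContinuousLinearMap.map_smul]
  ring

lemma dθ_bilin_right (hφ : ContDiff ℝ (⊤ : ℕ∞) φ) (p : Cn n) (a b : ℝ) (x y w : Cn n) :
    dθ φ p w (a • x + b • y) = a * dθ φ p w x + b * dθ φ p w y := by
  simp only [dθ_formula hφ, smul_add, smul_comm Complex.I, map_add, map_smul,
    ContinuousLinearMap.add_apply, ContinuousLinearMap.coe_smul', Pi.smul_apply,
    smul_eq_mul, ContinuousLinearMap.map_smul]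
  ring

lemma dθ_skew (p v w : Cn n) : dθ φ p v w = - dθ φ p w v := by
  simp only [dθ, d1h]; ring

-- (1,1)-type: dθ(Jv, Jw) = dθ(v,w) style facts via symmetry of H2
lemma dθ_J (hφ : ContDiff ℝ (⊤ : ℕ∞) φ) (p v w : Cn n) :
    dθ φ p (Complex.I • v) (Complex.I • w) = dθ φ p v w := by
  have hs := H2_symm hφ p
  simp only [dθ_formula hφ, smul_smul, Complex.I_mul_I, neg_one_smul, map_neg,
    ContinuousLinearMap.neg_apply]
  linear_combination (1/4 : ℝ) * (hs (Complex.I • v) w) - (1/4 : ℝ) * (hs (Complex.I • w) v)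

lemma dθ_J2 (hφ : ContDiff ℝ (⊤ : ℕ∞) φ) (p v w : Cn n) :
    dθ φ p v (Complex.I • w) + dθ φ p (Complex.I • v) w = 0 := by
  have hs := H2_symm hφ p
  simp only [dθ_formula hφ, smul_smul, Complex.I_mul_I, neg_one_smul, map_neg,
    ContinuousLinearMap.neg_apply]
  linear_combination (1/4 : ℝ) * (hs (Complex.I • w) (Complex.I • v)) + (1/4 : ℝ) * (hs v w)

lemma dθ_comb_l (hφ : ContDiff ℝ (⊤ : ℕ∞) φ) (p : Cn n) (a b : ℝ) (x y w : Cn n) :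
    dθ φ p (a • x - b • y) w = a * dθ φ p x w - b * dθ φ p y w := by
  have := dθ_bilin_left hφ p a (-b) x y w
  simpa [sub_eq_add_neg, neg_smul, neg_mul] using this

lemma dθ_comb_r (hφ : ContDiff ℝ (⊤ : ℕ∞) φ) (p : Cn n) (a b : ℝ) (x y w : Cn n) :
    dθ φ p w (a • x - b • y) = a * dθ φ p w x - b * dθ φ p w y := by
  have := dθ_bilin_right hφ p a (-b) x y w
  simpa [sub_eq_add_neg, neg_smul, neg_mul] using this

lemma dθ_add_l (hφ : ContDiff ℝ (⊤ : ℕ∞) φ) (p : Cn n) (x y w : Cn n) :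
    dθ φ p (x + y) w = dθ φ p x w + dθ φ p y w := by
  simpa using dθ_bilin_left hφ p 1 1 x y w

lemma dθ_add_r (hφ : ContDiff ℝ (⊤ : ℕ∞) φ) (p : Cn n) (x y w : Cn n) :
    dθ φ p w (x + y) = dθ φ p w x + dθ φ p w y := by
  simpa using dθ_bilin_right hφ p 1 1 x y w

lemma dθ_neg_l (hφ : ContDiff ℝ (⊤ : ℕ∞) φ) (p : Cn n) (x w : Cn n) :
    dθ φ p (-x) w = - dθ φ p x w := by
  have := dθ_comb_l hφ p 0 1 x x w; simpa using this

lemma dθ_neg_r (hφ : ContDiff ℝ (⊤ : ℕ∞) φ) (p : Cn n) (x w : Cn n) :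
    dθ φ p w (-x) = - dθ φ p w x := by
  have := dθ_comb_r hφ p 0 1 x x w; simpa using this

lemma dθ_smul_l (hφ : ContDiff ℝ (⊤ : ℕ∞) φ) (p : Cn n) (a : ℝ) (x w : Cn n) :
    dθ φ p (a • x) w = a * dθ φ p x w := by
  have := dθ_comb_l hφ p a 0 x x w; simpa using this

lemma dθ_smul_r (hφ : ContDiff ℝ (⊤ : ℕ∞) φ) (p : Cn n) (a : ℝ) (x w : Cn n) :
    dθ φ p w (a • x) = a * dθ φ p w x := by
  have := dθ_comb_r hφ p a 0 x x w; simpa using this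

-- ext2 of dθ : notation B
lemma B_add_l (hφ : ContDiff ℝ (⊤ : ℕ∞) φ) (p : Cn n) (u u' v : CV n) :
    ext2 (dθ φ) p (u + u') v = ext2 (dθ φ) p u v + ext2 (dθ φ) p u' v := by
  simp only [ext2, Prod.fst_add, Prod.snd_add, dθ_add_l hφ, dθ_add_r hφ]
  push_cast; ring

lemma B_add_r (hφ : ContDiff ℝ (⊤ : ℕ∞) φ) (p : Cn n) (u v v' : CV n) :
    ext2 (dθ φ) p u (v + v') = ext2 (dθ φ) p u v + ext2 (dθ φ) p u v' := by
  simp only [ext2, Prod.fst_add, Prod.snd_add, dθ_add_l hφ, dθ_add_r hφ]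
  push_cast; ring

lemma B_smul_l (hφ : ContDiff ℝ (⊤ : ℕ∞) φ) (p : Cn n) (z : ℂ) (u v : CV n) :
    ext2 (dθ φ) p (smulC z u) v = z * ext2 (dθ φ) p u v := by
  simp only [ext2, smulC, dθ_comb_l hφ, dθ_add_l hφ, dθ_smul_l hφ]
  apply Complex.ext <;>
    simp [Complex.mul_re, Complex.mul_im] <;> push_cast <;> ring

lemma B_smul_r (hφ : ContDiff ℝ (⊤ : ℕ∞) φ) (p : Cn n) (z : ℂ) (u v : CV n) :
    ext2 (dθ φ) p u (smulC z v) = z * ext2 (dθ φ) p u v := by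
  simp only [ext2, smulC, dθ_comb_r hφ, dθ_add_r hφ, dθ_smul_r hφ]
  apply Complex.ext <;>
    simp [Complex.mul_re, Complex.mul_im] <;> push_cast <;> ring

lemma B_skew (p : Cn n) (u v : CV n) :
    ext2 (dθ φ) p u v = - ext2 (dθ φ) p v u := by
  have h := dθ_skew (φ := φ) p
  rw [ext2, ext2, h u.1 v.1, h u.2 v.2, h u.1 v.2, h u.2 v.1]
  push_cast; ring

lemma B_conj (hφ : ContDiff ℝ (⊤ : ℕ∞) φ) (p : Cn n) (u v : CV n) :
    ext2 (dθ φ) p (conjC u) (conjC v) = starRingEnd ℂ (ext2 (dθ φ) p u v) := by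
  simp only [ext2, conjC, dθ_neg_l hφ, dθ_neg_r hφ, map_add, map_mul, Complex.conj_I,
    Complex.conj_ofReal]
  push_cast; ring

lemma B_type11 (hφ : ContDiff ℝ (⊤ : ℕ∞) φ) (p : Cn n) (u v : CV n)
    (hu : u.2 = -(Complex.I • u.1)) (hv : v.2 = -(Complex.I • v.1)) :
    ext2 (dθ φ) p u v = 0 := by
  have h2 := dθ_J2 hφ p u.1 v.1
  rw [ext2, hu, hv]
  simp only [dθ_neg_l hφ, dθ_neg_r hφ, neg_neg, dθ_J hφ, sub_self]
  push_cast
  have h2c : ((dθ φ p u.1 (Complex.I • v.1) : ℝ) : ℂ)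
      + ((dθ φ p (Complex.I • u.1) v.1 : ℝ) : ℂ) = 0 := by
    exact_mod_cast congrArg (fun t : ℝ => (t : ℂ)) h2
  linear_combination (-Complex.I) * h2c

-- conjC algebra
lemma conjC_add (u v : CV n) : conjC (u + v) = conjC u + conjC v := by
  simp [conjC, Prod.ext_iff]; abel

lemma conjC_conjC (u : CV n) : conjC (conjC u) = u := by simp [conjC]

lemma conjC_smulC (z : ℂ) (u : CV n) :
    conjC (smulC z u) = smulC (starRingEnd ℂ z) (conjC u) := by
  simp [conjC, smulC, Prod.ext_iff]
  abel

-- generic ext1 lemmas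
section ext1
variable {ω : Cn n → Cn n → ℝ} {p : Cn n}
  (hadd : ∀ x y, ω p (x + y) = ω p x + ω p y)
  (hsmul : ∀ (a : ℝ) x, ω p (a • x) = a * ω p x)

include hadd in
lemma ext1_add (u v : CV n) : ext1 ω p (u + v) = ext1 ω p u + ext1 ω p v := by
  simp only [ext1, Prod.fst_add, Prod.snd_add, hadd]; push_cast; ring

include hadd hsmul in
lemma ext1_smulC (z : ℂ) (u : CV n) : ext1 ω p (smulC z u) = z * ext1 ω p u := by
  have hsub : ∀ x y, ω p (x - y) = ω p x - ω p y := by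
    intro x y
    rw [sub_eq_add_neg, ← neg_one_smul ℝ y, hadd, hsmul]; ring
  simp only [ext1, smulC, hsub, hadd, hsmul]
  apply Complex.ext <;> simp [Complex.mul_re, Complex.mul_im] <;> ring

include hsmul in
lemma ext1_conj (u : CV n) :
    ext1 ω p (conjC u) = starRingEnd ℂ (ext1 ω p u) := by
  have hneg : ∀ x, ω p (-x) = - ω p x := by
    intro x; rw [← neg_one_smul ℝ x, hsmul]; ring
  simp only [ext1, conjC, hneg, map_add, map_mul, Complex.conj_I, Complex.conj_ofReal]
  push_cast; ring
end ext1

-- CLin framework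
def CLin {n : ℕ} (L : CV n → ℂ) : Prop :=
  (∀ u v, L (u + v) = L u + L v) ∧ (∀ z u, L (smulC z u) = z * L u)

namespace CLin
variable {L L' : CV n → ℂ}

lemma sum {ι : Type*} (hL : CLin L) (f : ι → CV n) (s : Finset ι) :
    L (∑ i ∈ s, f i) = ∑ i ∈ s, L (f i) :=
  map_sum (AddMonoidHom.mk' L hL.1) f s

lemma const_mul (hL : CLin L) (c : ℂ) : CLin (fun u => c * L u) := by
  refine ⟨fun u v => ?_, fun z u => ?_⟩ <;> simp [hL.1, hL.2] <;> ring

lemma add (hL : CLin L) (hL' : CLin L') : CLin (fun u => L u + L' u) := by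
  refine ⟨fun u v => ?_, fun z u => ?_⟩ <;> simp [hL.1, hL.2, hL'.1, hL'.2] <;> ring

lemma sub (hL : CLin L) (hL' : CLin L') : CLin (fun u => L u - L' u) := by
  refine ⟨fun u v => ?_, fun z u => ?_⟩ <;> simp [hL.1, hL.2, hL'.1, hL'.2] <;> ring

lemma sumf {ι : Type*} [Fintype ι] {f : ι → CV n → ℂ} (h : ∀ i, CLin (f i)) :
    CLin (fun u => ∑ i, f i u) := by
  refine ⟨fun u v => ?_, fun z u => ?_⟩
  · simp [(h _).1, Finset.sum_add_distrib]
  · simp [(h _).2, Finset.mul_sum]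

lemma wedge_l {α β : CV n → ℂ} (hα : CLin α) (hβ : CLin β) (v : CV n) :
    CLin (fun u => wedgeC α β u v) := by
  refine ⟨fun u u' => ?_, fun z u => ?_⟩ <;>
    simp [wedgeC, hα.1, hα.2, hβ.1, hβ.2] <;> ring

lemma wedge_r {α β : CV n → ℂ} (hα : CLin α) (hβ : CLin β) (u : CV n) :
    CLin (fun v => wedgeC α β u v) := by
  refine ⟨fun v v' => ?_, fun z v => ?_⟩ <;>
    simp [wedgeC, hα.1, hα.2, hβ.1, hβ.2] <;> ring

end CLin

lemma eval_zero {ι : Type*} [Fintype ι] {L : CV n → ℂ} (hL : CLin L)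
    {u : CV n} {c₁ c₂ : ι → ℂ} {c₃ c₄ : ℂ} {W' W'' : ι → CV n} {Th Nh : CV n}
    (hdec : u = (∑ a, smulC (c₁ a) (W' a)) + (∑ a, smulC (c₂ a) (W'' a))
      + smulC c₃ Th + smulC c₄ Nh)
    (h1 : ∀ a, L (W' a) = 0) (h2 : ∀ a, L (W'' a) = 0)
    (h3 : L Th = 0) (h4 : L Nh = 0) : L u = 0 := by
  rw [hdec, hL.1, hL.1, hL.1, hL.sum, hL.sum]
  simp [hL.2, h1, h2, h3, h4]

lemma dθ_zero_l (hφ : ContDiff ℝ (⊤ : ℕ∞) φ) (p w : Cn n) : dθ φ p 0 w = 0 := by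
  have := dθ_smul_l hφ p 0 w w; simpa using this

lemma dθ_zero_r (hφ : ContDiff ℝ (⊤ : ℕ∞) φ) (p w : Cn n) : dθ φ p w 0 = 0 := by
  have := dθ_smul_r hφ p 0 w w; simpa using this

set_option maxHeartbeats 1000000 in
theorem dtheta_structure_equation (n : ℕ) (φ : Cn n → ℝ) (hφ : ContDiff ℝ (⊤ : ℕ∞) φ)
    (U : Set (Cn n)) (hU : IsOpen U)
    (W : Fin (n-1) → Cn n → CV n)
    (θα : Fin (n-1) → Cn n → CV n → ℂ)
    (T N : Cn n → Cn n) (r : Cn n → ℝ)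
    (gm : Fin (n-1) → Fin (n-1) → Cn n → ℂ)
    -- {W_α} is a frame of T_{1,0}(ℱ): (1,0) vectors tangent to the level sets
    (hW10 : ∀ a, ∀ p ∈ U, (W a p).2 = -(Complex.I • (W a p).1))
    (hWtan : ∀ a, ∀ p ∈ U, ext1 (dφ1 φ) p (W a p) = 0)
    -- T = JN, so that ξ = ½(N − iT) is of type (1,0)
    (hJN : ∀ p ∈ U, T p = Complex.I • N p)
    (hTtan : ∀ p ∈ U, fderiv ℝ φ p (T p) = 0)
    (hNval : ∀ p ∈ U, fderiv ℝ φ p (N p) = 2)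
    -- ∂φ(ξ) = 1 and ∂∂̄φ(ξ, W̄_α) = 0   (∂∂̄φ = −i dθ)
    (hξ1 : ∀ p ∈ U, ext1 (dφ1 φ) p (xiF T N p) = 1)
    (hξorth : ∀ a, ∀ p ∈ U, ext2 (dθ φ) p (xiF T N p) (conjC (W a p)) = 0)
    -- transverse curvature r = 2∂∂̄φ(ξ,ξ̄)
    (hr : ∀ p ∈ U,
      (r p : ℂ) = 2 * (-Complex.I * ext2 (dθ φ) p (xiF T N p) (conjC (xiF T N p))))
    -- g_{αβ̄} = L_θ(W_α, W_β̄) = −i dθ(W_α, W̄_β)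
    (hg : ∀ a b, ∀ p ∈ U,
      gm a b p = -Complex.I * ext2 (dθ φ) p (W a p) (conjC (W b p)))
    -- {θ^α} is the dual coframe, annihilating conjugates, T and N
    (hθlin : ∀ a p, (∀ u v, θα a p (u + v) = θα a p u + θα a p v)
      ∧ ∀ z u, θα a p (smulC z u) = z * θα a p u)
    (hdual : ∀ a b, ∀ p ∈ U, θα a p (W b p) = if a = b then 1 else 0)
    (hdualbar : ∀ a b, ∀ p ∈ U, θα a p (conjC (W b p)) = 0)
    (hdualT : ∀ a, ∀ p ∈ U, θα a p (T p, (0 : Cn n)) = 0)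
    (hdualN : ∀ a, ∀ p ∈ U, θα a p (N p, (0 : Cn n)) = 0)
    -- decomposition of complexified tangent vectors in the frame {W_α, W̄_α, T, N}
    (hdecomp : ∀ p ∈ U, ∀ u : CV n,
      u = (∑ a, smulC (θα a p u) (W a p))
          + (∑ a, smulC (starRingEnd ℂ (θα a p (conjC u))) (conjC (W a p)))
          + smulC (ext1 (θf φ) p u) (T p, (0 : Cn n))
          + smulC ((1/2 : ℂ) * ext1 (dφ1 φ) p u) (N p, (0 : Cn n))) :
    -- conclusion: dθ = 2i g_{αβ̄} θ^α ∧ θ^β̄ + r dφ ∧ θ, hence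
    -- i_T dθ = −(r/2) dφ and i_N dθ = r θ
    (∀ p ∈ U, ∀ u v : CV n,
      ext2 (dθ φ) p u v
        = 2 * Complex.I * (∑ a, ∑ b, gm a b p *
            wedgeC (θα a p) (fun w => starRingEnd ℂ (θα b p (conjC w))) u v)
          + (r p : ℂ) * wedgeC (ext1 (dφ1 φ) p) (ext1 (θf φ) p) u v)
    ∧ (∀ p ∈ U, ∀ v : Cn n, dθ φ p (T p) v = -(r p / 2) * fderiv ℝ φ p v)
    ∧ (∀ p ∈ U, ∀ v : Cn n, dθ φ p (N p) v = r p * θf φ p v) := by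
  classical
  have hdφadd : ∀ p : Cn n, ∀ x y, dφ1 φ p (x + y) = dφ1 φ p x + dφ1 φ p y := by
    intro p x y; simp [dφ1]
  have hdφsmul : ∀ p : Cn n, ∀ (a : ℝ) (x : Cn n), dφ1 φ p (a • x) = a * dφ1 φ p x := by
    intro p a x; simp [dφ1]
  have hθfadd : ∀ p : Cn n, ∀ x y, θf φ p (x + y) = θf φ p x + θf φ p y := by
    intro p x y; simp [θf, smul_add]; ring
  have hθfsmul : ∀ p : Cn n, ∀ (a : ℝ) (x : Cn n), θf φ p (a • x) = a * θf φ p x := by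
    intro p a x
    rw [θf, θf, smul_comm, map_smul]
    simp; ring
  have main : ∀ p ∈ U, ∀ u v : CV n,
      ext2 (dθ φ) p u v
        = 2 * Complex.I * (∑ a, ∑ b, gm a b p *
            wedgeC (θα a p) (fun w => starRingEnd ℂ (θα b p (conjC w))) u v)
          + (r p : ℂ) * wedgeC (ext1 (dφ1 φ) p) (ext1 (θf φ) p) u v := by
    intro p hp
    have Dd : ∀ a b, θα a p (W b p) = if a = b then 1 else 0 := fun a b => hdual a b p hp
    have Ddb : ∀ a b, θα a p (conjC (W b p)) = 0 := fun a b => hdualbar a b p hp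
    have DT : ∀ a, θα a p (T p, (0:Cn n)) = 0 := fun a => hdualT a p hp
    have DN : ∀ a, θα a p (N p, (0:Cn n)) = 0 := fun a => hdualN a p hp
    have hCα : ∀ a, CLin (θα a p) := fun a => ⟨(hθlin a p).1, (hθlin a p).2⟩
    have hCβ : ∀ b, CLin (fun w => starRingEnd ℂ (θα b p (conjC w))) := by
      intro b
      refine ⟨fun u v => ?_, fun z u => ?_⟩
      · simp only [conjC_add, (hθlin b p).1, map_add]
      · simp only [conjC_smulC, (hθlin b p).2, map_mul, Complex.conj_conj]
    have hCdφ : CLin (ext1 (dφ1 φ) p) :=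
      ⟨ext1_add (hdφadd p), ext1_smulC (hdφadd p) (hdφsmul p)⟩
    have hCθe : CLin (ext1 (θf φ) p) :=
      ⟨ext1_add (hθfadd p), ext1_smulC (hθfadd p) (hθfsmul p)⟩
    have βW : ∀ b d, starRingEnd ℂ (θα b p (conjC (W d p))) = 0 := by
      intro b d; rw [Ddb]; simp
    have βWb : ∀ b d, starRingEnd ℂ (θα b p (conjC (conjC (W d p)))) = if b = d then 1 else 0 := by
      intro b d; rw [conjC_conjC, Dd]; split <;> simp
    have conjTh : conjC (T p, (0:Cn n)) = (T p, (0:Cn n)) := by simp [conjC]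
    have conjNh : conjC (N p, (0:Cn n)) = (N p, (0:Cn n)) := by simp [conjC]
    have βT : ∀ b, starRingEnd ℂ (θα b p (conjC (T p, (0:Cn n)))) = 0 := by
      intro b; rw [conjTh, DT]; simp
    have βN : ∀ b, starRingEnd ℂ (θα b p (conjC (N p, (0:Cn n)))) = 0 := by
      intro b; rw [conjNh, DN]; simp
    have edφW : ∀ c, ext1 (dφ1 φ) p (W c p) = 0 := fun c => hWtan c p hp
    have edφWb : ∀ c, ext1 (dφ1 φ) p (conjC (W c p)) = 0 := by
      intro c; rw [ext1_conj (hdφsmul p), edφW]; simp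
    have edφT : ext1 (dφ1 φ) p (T p, (0:Cn n)) = 0 := by
      simp [ext1, dφ1, hTtan p hp]
    have edφN : ext1 (dφ1 φ) p (N p, (0:Cn n)) = 2 := by
      simp [ext1, dφ1, hNval p hp]
    have hWre : ∀ c, fderiv ℝ φ p (W c p).1 = 0 ∧ fderiv ℝ φ p (W c p).2 = 0 := by
      intro c
      have h := edφW c
      rw [ext1, Complex.ext_iff] at h
      simpa [dφ1] using h
    have eθfW : ∀ c, ext1 (θf φ) p (W c p) = 0 := by
      intro c
      have hIW1 : Complex.I • (W c p).1 = -(W c p).2 := by rw [hW10 c p hp]; simp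
      have hIW2 : Complex.I • (W c p).2 = (W c p).1 := by
        rw [hW10 c p hp, smul_neg, smul_smul, Complex.I_mul_I, neg_one_smul, neg_neg]
      simp [ext1, θf, hIW1, hIW2, (hWre c).1, (hWre c).2]
    have eθfWb : ∀ c, ext1 (θf φ) p (conjC (W c p)) = 0 := by
      intro c; rw [ext1_conj (hθfsmul p), eθfW]; simp
    have hIT : Complex.I • T p = -(N p) := by
      rw [hJN p hp, smul_smul, Complex.I_mul_I, neg_one_smul]
    have eθfT : ext1 (θf φ) p (T p, (0:Cn n)) = 1 := by
      simp [ext1, θf, hIT, hNval p hp]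
    have eθfN : ext1 (θf φ) p (N p, (0:Cn n)) = 0 := by
      have h : Complex.I • N p = T p := (hJN p hp).symm
      simp [ext1, θf, h, hTtan p hp]
    have hξ2 : (xiF T N p).2 = -(Complex.I • (xiF T N p).1) := by
      simp only [xiF, hJN p hp]
      rw [smul_comm]
    have hBWW : ∀ c d, ext2 (dθ φ) p (W c p) (W d p) = 0 :=
      fun c d => B_type11 hφ p _ _ (hW10 c p hp) (hW10 d p hp)
    have hBWξ : ∀ c, ext2 (dθ φ) p (W c p) (xiF T N p) = 0 :=
      fun c => B_type11 hφ p _ _ (hW10 c p hp) hξ2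
    have hBξW : ∀ c, ext2 (dθ φ) p (xiF T N p) (W c p) = 0 :=
      fun c => B_type11 hφ p _ _ hξ2 (hW10 c p hp)
    have hBξξ : ext2 (dθ φ) p (xiF T N p) (xiF T N p) = 0 := B_type11 hφ p _ _ hξ2 hξ2
    have hBξWb : ∀ c, ext2 (dθ φ) p (xiF T N p) (conjC (W c p)) = 0 := fun c => hξorth c p hp
    have hBWbξ : ∀ c, ext2 (dθ φ) p (conjC (W c p)) (xiF T N p) = 0 := by
      intro c; rw [B_skew, hBξWb]; ring
    have hBWξb : ∀ c, ext2 (dθ φ) p (W c p) (conjC (xiF T N p)) = 0 := by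
      intro c
      have h := B_conj hφ p (conjC (W c p)) (xiF T N p)
      rw [conjC_conjC] at h
      rw [h, hBWbξ]; simp
    have hBξbW : ∀ c, ext2 (dθ φ) p (conjC (xiF T N p)) (W c p) = 0 := by
      intro c; rw [B_skew, hBWξb]; ring
    have hBξbWb : ∀ c, ext2 (dθ φ) p (conjC (xiF T N p)) (conjC (W c p)) = 0 := by
      intro c; rw [B_conj hφ, hBξW]; simp
    have hBWbWb : ∀ c d, ext2 (dθ φ) p (conjC (W c p)) (conjC (W d p)) = 0 := by
      intro c d; rw [B_conj hφ, hBWW]; simp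
    have hBWWb : ∀ c d, ext2 (dθ φ) p (W c p) (conjC (W d p)) = Complex.I * gm c d p := by
      intro c d
      have h := hg c d p hp
      linear_combination (-Complex.I) * h
        + ext2 (dθ φ) p (W c p) (conjC (W d p)) * Complex.I_sq
    have hBWbW : ∀ c d, ext2 (dθ φ) p (conjC (W c p)) (W d p) = -(Complex.I * gm d c p) := by
      intro c d; rw [B_skew, hBWWb]
    have hBξξb : ext2 (dθ φ) p (xiF T N p) (conjC (xiF T N p)) = Complex.I * (r p) / 2 := by
      have h := hr p hp
      linear_combination (-Complex.I/2) * h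
        + ext2 (dθ φ) p (xiF T N p) (conjC (xiF T N p)) * Complex.I_sq
    have hBξbξ : ext2 (dθ φ) p (conjC (xiF T N p)) (xiF T N p) = -(Complex.I * (r p) / 2) := by
      rw [B_skew, hBξξb]
    have hBξbξb : ext2 (dθ φ) p (conjC (xiF T N p)) (conjC (xiF T N p)) = 0 := by
      rw [B_conj hφ, hBξξ]; simp
    have hTh : (T p, (0:Cn n))
        = smulC Complex.I (xiF T N p) + smulC (-Complex.I) (conjC (xiF T N p)) := by
      simp [smulC, conjC, xiF, Prod.ext_iff]
      module
    have hNh : (N p, (0:Cn n)) = xiF T N p + conjC (xiF T N p) := by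
      simp [conjC, xiF, Prod.ext_iff]
      module
    have hBexp_r : ∀ (u : CV n) (a b : ℂ) (x y : CV n),
        ext2 (dθ φ) p u (smulC a x + smulC b y)
          = a * ext2 (dθ φ) p u x + b * ext2 (dθ φ) p u y := by
      intro u a b x y; rw [B_add_r hφ, B_smul_r hφ, B_smul_r hφ]
    have hBexp_l : ∀ (v : CV n) (a b : ℂ) (x y : CV n),
        ext2 (dθ φ) p (smulC a x + smulC b y) v
          = a * ext2 (dθ φ) p x v + b * ext2 (dθ φ) p y v := by
      intro v a b x y; rw [B_add_l hφ, B_smul_l hφ, B_smul_l hφ]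
    have hBWbξb : ∀ c, ext2 (dθ φ) p (conjC (W c p)) (conjC (xiF T N p)) = 0 := by
      intro c; rw [B_conj hφ, hBWξ]; simp
    have hBWT : ∀ c, ext2 (dθ φ) p (W c p) (T p, (0:Cn n)) = 0 := by
      intro c; rw [hTh, hBexp_r, hBWξ, hBWξb]; ring
    have hBWN : ∀ c, ext2 (dθ φ) p (W c p) (N p, (0:Cn n)) = 0 := by
      intro c; rw [hNh, B_add_r hφ, hBWξ, hBWξb]; ring
    have hBWbT : ∀ c, ext2 (dθ φ) p (conjC (W c p)) (T p, (0:Cn n)) = 0 := by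
      intro c; rw [hTh, hBexp_r, hBWbξ, hBWbξb]; ring
    have hBWbN : ∀ c, ext2 (dθ φ) p (conjC (W c p)) (N p, (0:Cn n)) = 0 := by
      intro c; rw [hNh, B_add_r hφ, hBWbξ, hBWbξb]; ring
    have hBTW : ∀ c, ext2 (dθ φ) p (T p, (0:Cn n)) (W c p) = 0 := by
      intro c; rw [hTh, hBexp_l, hBξW, hBξbW]; ring
    have hBTWb : ∀ c, ext2 (dθ φ) p (T p, (0:Cn n)) (conjC (W c p)) = 0 := by
      intro c; rw [hTh, hBexp_l, hBξWb, hBξbWb]; ring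
    have hBNW : ∀ c, ext2 (dθ φ) p (N p, (0:Cn n)) (W c p) = 0 := by
      intro c; rw [hNh, B_add_l hφ, hBξW, hBξbW]; ring
    have hBNWb : ∀ c, ext2 (dθ φ) p (N p, (0:Cn n)) (conjC (W c p)) = 0 := by
      intro c; rw [hNh, B_add_l hφ, hBξWb, hBξbWb]; ring
    have hBTN : ext2 (dθ φ) p (T p, (0:Cn n)) (N p, (0:Cn n)) = -(r p : ℂ) := by
      rw [hTh, hNh, hBexp_l, B_add_r hφ, B_add_r hφ, hBξξ, hBξξb, hBξbξ, hBξbξb]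
      linear_combination (r p : ℂ) * Complex.I_sq
    have hBNT : ext2 (dθ φ) p (N p, (0:Cn n)) (T p, (0:Cn n)) = (r p : ℂ) := by
      rw [B_skew, hBTN]; ring
    have hBdiag : ∀ u, ext2 (dθ φ) p u u = 0 := by
      intro u
      have h := B_skew (φ := φ) p u u
      linear_combination h / 2
    set F : CV n → CV n → ℂ := fun u v =>
      ext2 (dθ φ) p u v
        - (2 * Complex.I * (∑ a, ∑ b, gm a b p *
            wedgeC (θα a p) (fun w => starRingEnd ℂ (θα b p (conjC w))) u v)
          + (r p : ℂ) * wedgeC (ext1 (dφ1 φ) p) (ext1 (θf φ) p) u v) with hFdef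
    have hBlin_l : ∀ v, CLin (fun u => ext2 (dθ φ) p u v) :=
      fun v => ⟨fun u u' => B_add_l hφ p u u' v, fun z u => B_smul_l hφ p z u v⟩
    have hBlin_r : ∀ u, CLin (fun v => ext2 (dθ φ) p u v) :=
      fun u => ⟨fun x y => B_add_r hφ p u x y, fun z x => B_smul_r hφ p z u x⟩
    have hFlin_l : ∀ v, CLin (fun u => F u v) := fun v =>
      (hBlin_l v).sub
        (((CLin.sumf fun a => CLin.sumf fun b =>
            (CLin.wedge_l (hCα a) (hCβ b) v).const_mul (gm a b p)).const_mul
              (2*Complex.I)).add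
          ((CLin.wedge_l hCdφ hCθe v).const_mul ((r p : ℂ))))
    have hFlin_r : ∀ u, CLin (fun v => F u v) := fun u =>
      (hBlin_r u).sub
        (((CLin.sumf fun a => CLin.sumf fun b =>
            (CLin.wedge_r (hCα a) (hCβ b) u).const_mul (gm a b p)).const_mul
              (2*Complex.I)).add
          ((CLin.wedge_r hCdφ hCθe u).const_mul ((r p : ℂ))))
    -- the sixteen frame values
    have cWW : ∀ c d, F (W c p) (W d p) = 0 := by
      intro c d
      simp [hFdef, wedgeC, Dd, Ddb, DT, DN, βW, βWb, βT, βN, edφW, edφWb, edφT, edφN,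
        eθfW, eθfWb, eθfT, eθfN, mul_ite, ite_mul, Finset.sum_ite_eq', hBWW]
    have cWWb : ∀ c d, F (W c p) (conjC (W d p)) = 0 := by
      intro c d
      simp [hFdef, wedgeC, Dd, Ddb, DT, DN, βW, βWb, βT, βN, edφW, edφWb, edφT, edφN,
        eθfW, eθfWb, eθfT, eθfN, mul_ite, ite_mul, Finset.sum_ite_eq', hBWWb]
      ring
    have cWT : ∀ c, F (W c p) (T p, (0:Cn n)) = 0 := by
      intro c
      simp [hFdef, wedgeC, Dd, Ddb, DT, DN, βW, βWb, βT, βN, edφW, edφWb, edφT, edφN,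
        eθfW, eθfWb, eθfT, eθfN, mul_ite, ite_mul, Finset.sum_ite_eq', hBWT]
    have cWN : ∀ c, F (W c p) (N p, (0:Cn n)) = 0 := by
      intro c
      simp [hFdef, wedgeC, Dd, Ddb, DT, DN, βW, βWb, βT, βN, edφW, edφWb, edφT, edφN,
        eθfW, eθfWb, eθfT, eθfN, mul_ite, ite_mul, Finset.sum_ite_eq', hBWN]
    have cWbW : ∀ c d, F (conjC (W c p)) (W d p) = 0 := by
      intro c d
      simp [hFdef, wedgeC, Dd, Ddb, DT, DN, βW, βWb, βT, βN, edφW, edφWb, edφT, edφN,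
        eθfW, eθfWb, eθfT, eθfN, mul_ite, ite_mul, Finset.sum_ite_eq', hBWbW]
      ring
    have cWbWb : ∀ c d, F (conjC (W c p)) (conjC (W d p)) = 0 := by
      intro c d
      simp [hFdef, wedgeC, Dd, Ddb, DT, DN, βW, βWb, βT, βN, edφW, edφWb, edφT, edφN,
        eθfW, eθfWb, eθfT, eθfN, mul_ite, ite_mul, Finset.sum_ite_eq', hBWbWb]
    have cWbT : ∀ c, F (conjC (W c p)) (T p, (0:Cn n)) = 0 := by
      intro c
      simp [hFdef, wedgeC, Dd, Ddb, DT, DN, βW, βWb, βT, βN, edφW, edφWb, edφT, edφN,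
        eθfW, eθfWb, eθfT, eθfN, mul_ite, ite_mul, Finset.sum_ite_eq', hBWbT]
    have cWbN : ∀ c, F (conjC (W c p)) (N p, (0:Cn n)) = 0 := by
      intro c
      simp [hFdef, wedgeC, Dd, Ddb, DT, DN, βW, βWb, βT, βN, edφW, edφWb, edφT, edφN,
        eθfW, eθfWb, eθfT, eθfN, mul_ite, ite_mul, Finset.sum_ite_eq', hBWbN]
    have cTW : ∀ d, F (T p, (0:Cn n)) (W d p) = 0 := by
      intro d
      simp [hFdef, wedgeC, Dd, Ddb, DT, DN, βW, βWb, βT, βN, edφW, edφWb, edφT, edφN,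
        eθfW, eθfWb, eθfT, eθfN, mul_ite, ite_mul, Finset.sum_ite_eq', hBTW]
    have cTWb : ∀ d, F (T p, (0:Cn n)) (conjC (W d p)) = 0 := by
      intro d
      simp [hFdef, wedgeC, Dd, Ddb, DT, DN, βW, βWb, βT, βN, edφW, edφWb, edφT, edφN,
        eθfW, eθfWb, eθfT, eθfN, mul_ite, ite_mul, Finset.sum_ite_eq', hBTWb]
    have cTT : F (T p, (0:Cn n)) (T p, (0:Cn n)) = 0 := by
      simp [hFdef, wedgeC, Dd, Ddb, DT, DN, βW, βWb, βT, βN, edφW, edφWb, edφT, edφN,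
        eθfW, eθfWb, eθfT, eθfN, mul_ite, ite_mul, Finset.sum_ite_eq', hBdiag]
    have cTN : F (T p, (0:Cn n)) (N p, (0:Cn n)) = 0 := by
      simp [hFdef, wedgeC, Dd, Ddb, DT, DN, βW, βWb, βT, βN, edφW, edφWb, edφT, edφN,
        eθfW, eθfWb, eθfT, eθfN, mul_ite, ite_mul, Finset.sum_ite_eq', hBTN]
    have cNW : ∀ d, F (N p, (0:Cn n)) (W d p) = 0 := by
      intro d
      simp [hFdef, wedgeC, Dd, Ddb, DT, DN, βW, βWb, βT, βN, edφW, edφWb, edφT, edφN,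
        eθfW, eθfWb, eθfT, eθfN, mul_ite, ite_mul, Finset.sum_ite_eq', hBNW]
    have cNWb : ∀ d, F (N p, (0:Cn n)) (conjC (W d p)) = 0 := by
      intro d
      simp [hFdef, wedgeC, Dd, Ddb, DT, DN, βW, βWb, βT, βN, edφW, edφWb, edφT, edφN,
        eθfW, eθfWb, eθfT, eθfN, mul_ite, ite_mul, Finset.sum_ite_eq', hBNWb]
    have cNT : F (N p, (0:Cn n)) (T p, (0:Cn n)) = 0 := by
      simp [hFdef, wedgeC, Dd, Ddb, DT, DN, βW, βWb, βT, βN, edφW, edφWb, edφT, edφN,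
        eθfW, eθfWb, eθfT, eθfN, mul_ite, ite_mul, Finset.sum_ite_eq', hBNT]
    have cNN : F (N p, (0:Cn n)) (N p, (0:Cn n)) = 0 := by
      simp [hFdef, wedgeC, Dd, Ddb, DT, DN, βW, βWb, βT, βN, edφW, edφWb, edφT, edφN,
        eθfW, eθfWb, eθfT, eθfN, mul_ite, ite_mul, Finset.sum_ite_eq', hBdiag]
    -- rows
    have rW : ∀ c (v : CV n), F (W c p) v = 0 := fun c v =>
      eval_zero (hFlin_r (W c p)) (hdecomp p hp v) (cWW c) (cWWb c) (cWT c) (cWN c)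
    have rWb : ∀ c (v : CV n), F (conjC (W c p)) v = 0 := fun c v =>
      eval_zero (hFlin_r (conjC (W c p))) (hdecomp p hp v) (cWbW c) (cWbWb c) (cWbT c) (cWbN c)
    have rT : ∀ v : CV n, F (T p, (0:Cn n)) v = 0 := fun v =>
      eval_zero (hFlin_r (T p, (0:Cn n))) (hdecomp p hp v) cTW cTWb cTT cTN
    have rN : ∀ v : CV n, F (N p, (0:Cn n)) v = 0 := fun v =>
      eval_zero (hFlin_r (N p, (0:Cn n))) (hdecomp p hp v) cNW cNWb cNT cNN
    intro u v
    have key : F u v = 0 :=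
      eval_zero (hFlin_l v) (hdecomp p hp u) (fun c => rW c v) (fun c => rWb c v) (rT v) (rN v)
    rw [hFdef] at key
    linear_combination key
  refine ⟨main, ?_, ?_⟩
  · intro p hp v
    have h := main p hp (T p, (0:Cn n)) (v, (0:Cn n))
    have DT : ∀ a, θα a p (T p, (0:Cn n)) = 0 := fun a => hdualT a p hp
    have conjTh : conjC (T p, (0:Cn n)) = (T p, (0:Cn n)) := by simp [conjC]
    have βT : ∀ b, starRingEnd ℂ (θα b p (conjC (T p, (0:Cn n)))) = 0 := by
      intro b; rw [conjTh, DT]; simp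
    have edφT : ext1 (dφ1 φ) p (T p, (0:Cn n)) = 0 := by simp [ext1, dφ1, hTtan p hp]
    have hIT : Complex.I • T p = -(N p) := by
      rw [hJN p hp, smul_smul, Complex.I_mul_I, neg_one_smul]
    have eθfT : ext1 (θf φ) p (T p, (0:Cn n)) = 1 := by
      simp [ext1, θf, hIT, hNval p hp]
    have hL : ext2 (dθ φ) p (T p, (0:Cn n)) (v, (0:Cn n)) = ((dθ φ p (T p) v : ℝ) : ℂ) := by
      simp [ext2, dθ_zero_l hφ, dθ_zero_r hφ]
    have hsum : (∑ a, ∑ b, gm a b p *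
        wedgeC (θα a p) (fun w => starRingEnd ℂ (θα b p (conjC w)))
          (T p, (0:Cn n)) (v, (0:Cn n))) = 0 := by
      simp [wedgeC, DT, βT]
    have edφv : ext1 (dφ1 φ) p (v, (0:Cn n)) = ((fderiv ℝ φ p v : ℝ) : ℂ) := by
      simp [ext1, dφ1]
    have hw : wedgeC (ext1 (dφ1 φ) p) (ext1 (θf φ) p) (T p, (0:Cn n)) (v, (0:Cn n))
        = -(1/2) * ((fderiv ℝ φ p v : ℝ) : ℂ) := by
      rw [wedgeC, edφT, eθfT, edφv]
      ring
    rw [hL, hsum, hw] at h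
    have h2 : ((dθ φ p (T p) v : ℝ) : ℂ) = ((-(r p / 2) * fderiv ℝ φ p v : ℝ) : ℂ) := by
      push_cast
      linear_combination h
    exact_mod_cast h2
  · intro p hp v
    have h := main p hp (N p, (0:Cn n)) (v, (0:Cn n))
    have DN : ∀ a, θα a p (N p, (0:Cn n)) = 0 := fun a => hdualN a p hp
    have conjNh : conjC (N p, (0:Cn n)) = (N p, (0:Cn n)) := by simp [conjC]
    have βN : ∀ b, starRingEnd ℂ (θα b p (conjC (N p, (0:Cn n)))) = 0 := by
      intro b; rw [conjNh, DN]; simp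
    have edφN : ext1 (dφ1 φ) p (N p, (0:Cn n)) = 2 := by simp [ext1, dφ1, hNval p hp]
    have eθfN : ext1 (θf φ) p (N p, (0:Cn n)) = 0 := by
      have hIN : Complex.I • N p = T p := (hJN p hp).symm
      simp [ext1, θf, hIN, hTtan p hp]
    have eθf0 : θf φ p 0 = 0 := by simp [θf]
    have hL : ext2 (dθ φ) p (N p, (0:Cn n)) (v, (0:Cn n)) = ((dθ φ p (N p) v : ℝ) : ℂ) := by
      simp [ext2, dθ_zero_l hφ, dθ_zero_r hφ]
    have hsum : (∑ a, ∑ b, gm a b p *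
        wedgeC (θα a p) (fun w => starRingEnd ℂ (θα b p (conjC w)))
          (N p, (0:Cn n)) (v, (0:Cn n))) = 0 := by
      simp [wedgeC, DN, βN]
    have eθfv : ext1 (θf φ) p (v, (0:Cn n)) = ((θf φ p v : ℝ) : ℂ) := by
      simp [ext1, eθf0]
    have hw : wedgeC (ext1 (dφ1 φ) p) (ext1 (θf φ) p) (N p, (0:Cn n)) (v, (0:Cn n))
        = ((θf φ p v : ℝ) : ℂ) := by
      rw [wedgeC, edφN, eθfN, eθfv]
      ring
    rw [hL, hsum, hw] at h
    have h2 : ((dθ φ p (N p) v : ℝ) : ℂ) = ((r p * θf φ p v : ℝ) : ℂ) := by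
      push_cast
      linear_combination h
    exact_mod_cast h2
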